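/- For every α > 0 there exists a constant c > 0 such that the following holds for every integer n ≥ 4: set R = α·n^{1/3} and h = α·n^{−1/6}; then for every set A of n points in ℝ³ whose pairwise Euclidean distances are all at least 1 and which is contained in the closed ball of radius R centered at the origin, the set 𝒮_A = {(v, c) ∈ S² × ℝ³ : ‖c‖ ≤ 2R and Cap(c, v) ∩ A ≠ ∅} satisfies μ(𝒮_A) ≥ c · μ(S² × {c ∈ ℝ³ : ‖c‖ ≤ 2R}) = c · 4π · (32/3)πR³. -/

import Mathlib

/-! Second moment method. Let `C_a = capParams R h a` be the set of parameters `(v, c)` whose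
cap contains `a`, and `f = ∑_{a ∈ A} 1_{C_a}`. For fixed `v` the slice of `C_a` is a translate of
a rotated cap of volume `≍ R h²`, so `∫ f ≍ n R h² = n α³`. A cap `(v, c)` containing both `a`
and `b` forces `|a - b|² ≤ 8 R h` and `|⟪a - b, v⟫| ≤ h`, a band of directions of measure
`≲ h / |a - b|`; as a shell of radius `k` around `a` holds `≲ k²` points of the `1`-separated
set `A`, summing over `b` gives `∫ f² ≲ n (R h² + R² h⁴) = O_α(n)`. Cauchy–Schwarz,
`(∫ f)² ≤ μ(⋃ C_a) ∫ f²`, then yields `μ(⋃ C_a) ≳ n ≍ R³`, and `⋃ C_a` lies in the region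
`‖c‖ ≤ 2R` since `A` lies in the ball of radius `R`. -/
open scoped RealInnerProductSpace
open Real MeasureTheory Metric

noncomputable def capParamMeasure :
    Measure (sphere (0 : EuclideanSpace ℝ (Fin 3)) 1 × EuclideanSpace ℝ (Fin 3)) :=
  ((volume : Measure (EuclideanSpace ℝ (Fin 3))).toSphere).prod volume

def capParams (R h : ℝ) (a : EuclideanSpace ℝ (Fin 3)) :
    Set (sphere (0 : EuclideanSpace ℝ (Fin 3)) 1 × EuclideanSpace ℝ (Fin 3)) :=
  {p | ‖a - p.2‖ ≤ R ∧ R - h ≤ ⟪a - p.2, (p.1 : EuclideanSpace ℝ (Fin 3))⟫}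

open scoped ENNReal Pointwise

local notation "ℝ³" => EuclideanSpace ℝ (Fin 3)
local notation "𝕊²" => sphere (0 : ℝ³) 1

theorem ENNReal.sq_lintegral_mul_le {Ω : Type*} [MeasurableSpace Ω] {μ : Measure Ω}
    {f g : Ω → ℝ≥0∞} (hf : AEMeasurable f μ) (hg : AEMeasurable g μ) :
    (∫⁻ x, f x * g x ∂μ) ^ 2 ≤ (∫⁻ x, f x ^ 2 ∂μ) * ∫⁻ x, g x ^ 2 ∂μ := by
  have holder := ENNReal.lintegral_mul_le_Lp_mul_Lq μ Real.HolderConjugate.two_two hf hg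
  simp only [ENNReal.rpow_two] at holder
  calc (∫⁻ x, f x * g x ∂μ) ^ 2
      ≤ ((∫⁻ x, f x ^ 2 ∂μ) ^ (1 / 2 : ℝ) * (∫⁻ x, g x ^ 2 ∂μ) ^ (1 / 2 : ℝ)) ^ 2 := by
        gcongr; exact holder
    _ = (∫⁻ x, f x ^ 2 ∂μ) * ∫⁻ x, g x ^ 2 ∂μ := by
        rw [mul_pow, ← ENNReal.rpow_two, ← ENNReal.rpow_two, ← ENNReal.rpow_mul,
          ← ENNReal.rpow_mul]
        norm_num

theorem sq_sum_measure_le_measure_biUnion_mul_sum_measure_inter {Ω ι : Type*}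
    [MeasurableSpace Ω] (μ : Measure Ω) (A : Finset ι) {s : ι → Set Ω}
    (hs : ∀ i ∈ A, MeasurableSet (s i)) :
    (∑ i ∈ A, μ (s i)) ^ 2 ≤ μ (⋃ i ∈ A, s i) * ∑ i ∈ A, ∑ j ∈ A, μ (s i ∩ s j) := by
  set U := ⋃ i ∈ A, s i
  set f : Ω → ℝ≥0∞ := fun x => ∑ i ∈ A, (s i).indicator 1 x
  have hU : MeasurableSet U := A.measurableSet_biUnion hs
  have hf : Measurable f := Finset.measurable_sum _ fun i hi => measurable_one.indicator (hs i hi)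
  have h_first : ∫⁻ x, f x * U.indicator 1 x ∂μ = ∑ i ∈ A, μ (s i) := by
    have hfU : ∀ x, f x * U.indicator 1 x = f x := by
      intro x
      by_cases hx : x ∈ U
      · simp [Set.indicator_of_mem hx]
      · have : ∀ i ∈ A, x ∉ s i := fun i hi hxi => hx (Set.mem_biUnion hi hxi)
        simp [f, Finset.sum_eq_zero fun i hi => Set.indicator_of_notMem (this i hi) _]
    simp_rw [hfU, f]
    rw [lintegral_finsetSum' _ fun i hi => (measurable_one.indicator (hs i hi)).aemeasurable]
    exact Finset.sum_congr rfl fun i hi => lintegral_indicator_one (hs i hi)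
  have h_second : ∫⁻ x, f x ^ 2 ∂μ = ∑ i ∈ A, ∑ j ∈ A, μ (s i ∩ s j) := by
    have hf2 : ∀ x, f x ^ 2 = ∑ i ∈ A, ∑ j ∈ A, (s i ∩ s j).indicator 1 x := by
      intro x
      simp only [f, sq, Finset.sum_mul_sum, Set.inter_indicator_one, Pi.mul_apply]
    simp_rw [hf2]
    rw [lintegral_finsetSum' _ fun i hi => (Finset.measurable_sum _ fun j hj =>
      measurable_one.indicator ((hs i hi).inter (hs j hj))).aemeasurable]
    refine Finset.sum_congr rfl fun i hi => ?_
    rw [lintegral_finsetSum' _ fun j hj =>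
      (measurable_one.indicator ((hs i hi).inter (hs j hj))).aemeasurable]
    exact Finset.sum_congr rfl fun j hj => lintegral_indicator_one ((hs i hi).inter (hs j hj))
  have h_U : ∫⁻ x, U.indicator 1 x ^ 2 ∂μ = μ U := by
    have h_idem : ∀ x, U.indicator (1 : Ω → ℝ≥0∞) x ^ 2 = U.indicator 1 x := fun x => by
      by_cases hx : x ∈ U <;> simp [hx]
    simp_rw [h_idem]
    exact lintegral_indicator_one hU
  have h_cs := ENNReal.sq_lintegral_mul_le (μ := μ) hf.aemeasurable
    (measurable_one.indicator hU).aemeasurable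
  rw [h_first, h_second, h_U] at h_cs
  exact h_cs.trans_eq (mul_comm _ _)

theorem card_le_of_separated_of_subset_shell {E : Type*} [NormedAddCommGroup E]
    [NormedSpace ℝ E] [FiniteDimensional ℝ E] (hE : Module.finrank ℝ E = 3) {s : Finset E}
    (hs : ∀ x ∈ s, ∀ y ∈ s, x ≠ y → 1 ≤ dist x y) {a : E} {r : ℝ} (hr : 1 ≤ r)
    (hshell : ∀ b ∈ s, r ≤ dist a b ∧ dist a b < r + 1) :
    (s.card : ℝ) ≤ 124 * r ^ 2 := by
  borelize E
  have : Nontrivial E := Module.nontrivial_of_finrank_pos (R := ℝ) (by omega)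
  let μ : Measure E := Measure.addHaar
  have h_disj : (s : Set E).PairwiseDisjoint fun b => ball b (1 / 2) := fun x hx y hy hxy =>
    ball_disjoint_ball (by linarith [hs x hx y hy hxy])
  have h_inner_disj : Disjoint (ball a (r - 1 / 2)) (⋃ b ∈ s, ball b (1 / 2)) := by
    simp only [Set.disjoint_iUnion_right]
    exact fun b hb => ball_disjoint_ball (by linarith [(hshell b hb).1])
  have h_sub : ball a (r - 1 / 2) ∪ ⋃ b ∈ s, ball b (1 / 2) ⊆ ball a (r + 3 / 2) := by
    refine Set.union_subset (ball_subset_ball (by linarith)) (Set.iUnion₂_subset fun b hb => ?_)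
    exact ball_subset_ball' (by rw [dist_comm]; linarith [(hshell b hb).2])
  have h_vol : μ (ball a (r - 1 / 2)) + s.card * μ (ball a (1 / 2)) ≤ μ (ball a (r + 3 / 2)) := by
    calc μ (ball a (r - 1 / 2)) + s.card * μ (ball a (1 / 2))
        = μ (ball a (r - 1 / 2) ∪ ⋃ b ∈ s, ball b (1 / 2)) := by
          rw [measure_union h_inner_disj (s.measurableSet_biUnion fun b _ => measurableSet_ball),
            measure_biUnion_finset h_disj fun b _ => measurableSet_ball]
          simp [Measure.addHaar_ball_center]
      _ ≤ μ (ball a (r + 3 / 2)) := measure_mono h_sub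
  simp only [Measure.addHaar_ball _ _ (by linarith : (0 : ℝ) ≤ r - 1 / 2),
    Measure.addHaar_ball _ _ (by linarith : (0 : ℝ) ≤ r + 3 / 2),
    Measure.addHaar_ball _ _ (by norm_num : (0 : ℝ) ≤ 1 / 2), hE, ← mul_assoc, ← add_mul] at h_vol
  have h_real := (ENNReal.mul_le_mul_iff_left (measure_ball_pos μ (0 : E) one_pos).ne'
    measure_ball_lt_top.ne).mp h_vol
  rw [← ENNReal.ofReal_natCast, ← ENNReal.ofReal_mul (by positivity),
    ← ENNReal.ofReal_add (pow_nonneg (by linarith) 3) (by positivity),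
    ENNReal.ofReal_le_ofReal_iff (by positivity)] at h_real
  nlinarith

theorem sum_inv_dist_le_of_separated {E : Type*} [NormedAddCommGroup E]
    [NormedSpace ℝ E] [FiniteDimensional ℝ E] (hE : Module.finrank ℝ E = 3) {A : Finset E}
    (hA : ∀ x ∈ A, ∀ y ∈ A, x ≠ y → 1 ≤ dist x y) {a : E} (ha : a ∈ A) {K : ℝ} (hK : 0 ≤ K) :
    ∑ b ∈ A with 0 < dist a b ∧ dist a b ≤ K, (dist a b)⁻¹ ≤ 124 * K ^ 2 := by
  set S := A.filter fun b => 0 < dist a b ∧ dist a b ≤ K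
  set M := ⌊K⌋₊
  have h_one_le : ∀ b ∈ S, 1 ≤ dist a b := fun b hb => by
    rw [Finset.mem_filter] at hb
    exact hA a ha b hb.1 (dist_pos.mp hb.2.1)
  have h_maps : ∀ b ∈ S, ⌊dist a b⌋₊ ∈ Finset.Icc 1 M := fun b hb =>
    Finset.mem_Icc.mpr ⟨Nat.le_floor (by exact_mod_cast h_one_le b hb),
      Nat.floor_mono (Finset.mem_filter.mp hb).2.2⟩
  have h_shell : ∀ k ∈ Finset.Icc 1 M,
      ∑ b ∈ S with ⌊dist a b⌋₊ = k, (dist a b)⁻¹ ≤ 124 * (M : ℝ) := by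
    intro k hk
    obtain ⟨hk1, hkM⟩ := Finset.mem_Icc.mp hk
    have hk0 : (0 : ℝ) < k := by exact_mod_cast hk1
    have h_dist : ∀ b ∈ S.filter (⌊dist a ·⌋₊ = k), k ≤ dist a b ∧ dist a b < k + 1 := by
      intro b hb
      rw [Finset.mem_filter] at hb
      rw [← hb.2]
      exact ⟨Nat.floor_le dist_nonneg, Nat.lt_floor_add_one _⟩
    have h_card := card_le_of_separated_of_subset_shell hE
      (fun x hx y hy => hA x (Finset.mem_of_mem_filter x (Finset.mem_of_mem_filter x hx))
        y (Finset.mem_of_mem_filter y (Finset.mem_of_mem_filter y hy))) (by exact_mod_cast hk1)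
      h_dist
    calc ∑ b ∈ S with ⌊dist a b⌋₊ = k, (dist a b)⁻¹
        ≤ (S.filter (⌊dist a ·⌋₊ = k)).card * (k : ℝ)⁻¹ := by
          rw [← nsmul_eq_mul]
          exact Finset.sum_le_card_nsmul _ _ _ fun b hb => inv_anti₀ hk0 (h_dist b hb).1
      _ ≤ 124 * (k : ℝ) ^ 2 * (k : ℝ)⁻¹ := by gcongr
      _ = 124 * k := by field_simp
      _ ≤ 124 * M := by gcongr
  calc ∑ b ∈ S, (dist a b)⁻¹
      = ∑ k ∈ Finset.Icc 1 M, ∑ b ∈ S with ⌊dist a b⌋₊ = k, (dist a b)⁻¹ :=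
        (Finset.sum_fiberwise_of_maps_to h_maps _).symm
    _ ≤ M * (124 * M) := by
        simpa using Finset.sum_le_card_nsmul _ _ _ h_shell
    _ ≤ 124 * K ^ 2 := by nlinarith [Nat.floor_le hK, (Nat.cast_nonneg M : (0 : ℝ) ≤ M)]

theorem exists_orthonormalBasis_apply_zero_eq {E : Type*} [NormedAddCommGroup E]
    [InnerProductSpace ℝ E] [FiniteDimensional ℝ E] {n : ℕ} (hn : Module.finrank ℝ E = n + 1)
    {u : E} (hu : ‖u‖ = 1) : ∃ b : OrthonormalBasis (Fin (n + 1)) ℝ E, b 0 = u := by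
  have h_orth : Orthonormal ℝ (({0} : Set (Fin (n + 1))).domRestrict fun _ => u) :=
    ⟨fun _ => hu, fun i j hij => absurd (Subsingleton.elim i j) hij⟩
  obtain ⟨b, hb⟩ := h_orth.exists_orthonormalBasis_extension_of_card_eq (by simpa using hn)
  exact ⟨b, hb 0 rfl⟩

theorem volume_setOf_inner_norm_eq {E : Type*} [NormedAddCommGroup E] [InnerProductSpace ℝ E]
    [FiniteDimensional ℝ E] [MeasurableSpace E] [BorelSpace E] {n : ℕ}
    (hn : Module.finrank ℝ E = n + 1) (P : ℝ → ℝ → Prop) {u : E} (hu : ‖u‖ = 1) :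
    volume {x : E | P ⟪x, u⟫ ‖x‖} = volume {z : EuclideanSpace ℝ (Fin (n + 1)) | P (z 0) ‖z‖} := by
  obtain ⟨b, hb⟩ := exists_orthonormalBasis_apply_zero_eq hn hu
  rw [← b.measurePreserving_measurableEquiv.measure_preimage_equiv]
  congr 1
  ext x
  simp [OrthonormalBasis.measurableEquiv, ← hb, OrthonormalBasis.repr_apply_apply, real_inner_comm]

theorem EuclideanSpace.volume_setOf_forall_mem_Icc {ι : Type*} [Fintype ι] (a b : ι → ℝ) :
    volume {z : EuclideanSpace ℝ ι | ∀ i, z i ∈ Set.Icc (a i) (b i)} =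
      ∏ i, ENNReal.ofReal (b i - a i) := by
  rw [← Real.volume_Icc_pi,
    ← (EuclideanSpace.volume_preserving_symm_measurableEquiv_toLp ι).measure_preimage_equiv]
  congr 1
  ext z
  simp [Set.mem_Icc, forall_and, Pi.le_def]

theorem EuclideanSpace.norm_sq_fin_three (z : ℝ³) : ‖z‖ ^ 2 = z 0 ^ 2 + z 1 ^ 2 + z 2 ^ 2 := by
  simp [EuclideanSpace.norm_sq_eq, Fin.sum_univ_three]

theorem volume_toSphere_univ_fin_three :
    (volume : Measure ℝ³).toSphere Set.univ = ENNReal.ofReal (4 * π) := by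
  rw [Measure.toSphere_apply_univ, EuclideanSpace.volume_ball_fin_three]
  simp only [finrank_euclideanSpace, Fintype.card_fin, ENNReal.ofReal_one, one_pow, one_mul]
  rw [← ENNReal.ofReal_natCast, ← ENNReal.ofReal_mul (by norm_num)]
  congr 1
  push_cast
  ring

theorem volume_setOf_abs_apply_zero_le_norm_le {s : ℝ} (hs : 0 ≤ s) :
    volume {z : ℝ³ | |z 0| ≤ s ∧ ‖z‖ ≤ 1} ≤ ENNReal.ofReal (8 * s) := by
  calc volume {z : ℝ³ | |z 0| ≤ s ∧ ‖z‖ ≤ 1}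
      ≤ volume {z : ℝ³ | ∀ i, z i ∈ Set.Icc (![-s, -1, -1] i) (![s, 1, 1] i)} := by
        refine measure_mono fun z ⟨hz0, hz⟩ i => ?_
        have hzi : ∀ j, |z j| ≤ 1 := fun j => (PiLp.norm_apply_le z j).trans hz
        fin_cases i <;> simp [abs_le.mp hz0, abs_le.mp (hzi 1), abs_le.mp (hzi 2)]
    _ = ENNReal.ofReal (8 * s) := by
        rw [EuclideanSpace.volume_setOf_forall_mem_Icc, Fin.prod_univ_three]
        simp only [Matrix.cons_val_zero, Matrix.cons_val_one, Matrix.cons_val_two,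
          Matrix.head_cons, Matrix.tail_cons]
        rw [← ENNReal.ofReal_mul (by linarith), ← ENNReal.ofReal_mul (by nlinarith)]
        congr 1
        ring

theorem toSphere_setOf_abs_inner_le_le {w : ℝ³} (hw : w ≠ 0) {h : ℝ} (hh : 0 ≤ h) :
    (volume : Measure ℝ³).toSphere {v | |⟪w, (v : ℝ³)⟫| ≤ h} ≤
      ENNReal.ofReal (24 * h / ‖w‖) := by
  set s := h / ‖w‖
  have hs : 0 ≤ s := by positivity
  have h_closed : IsClosed {v : 𝕊² | |⟪w, (v : ℝ³)⟫| ≤ h} :=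
    isClosed_le (f := fun v : 𝕊² => |⟪w, (v : ℝ³)⟫|) (by fun_prop) continuous_const
  have h_cone : Set.Ioo (0 : ℝ) 1 • (Subtype.val '' {v : 𝕊² | |⟪w, (v : ℝ³)⟫| ≤ h}) ⊆
      {x : ℝ³ | |⟪x, ‖w‖⁻¹ • w⟫| ≤ s ∧ ‖x‖ ≤ 1} := by
    rintro _ ⟨t, ht, _, ⟨v, hv, rfl⟩, rfl⟩
    refine ⟨?_, ?_⟩
    · rw [real_inner_smul_left, real_inner_smul_right, real_inner_comm, abs_mul, abs_mul,
        abs_of_pos ht.1, abs_inv, abs_norm]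
      calc t * (‖w‖⁻¹ * |⟪w, (v : ℝ³)⟫|) ≤ 1 * (‖w‖⁻¹ * h) := by
            gcongr
            · exact ht.2.le
            · exact hv
        _ = s := by rw [one_mul, inv_mul_eq_div]
    · rw [norm_smul, norm_eq_of_mem_sphere v, mul_one, Real.norm_eq_abs, abs_of_pos ht.1]
      exact ht.2.le
  rw [Measure.toSphere_apply' _ h_closed.measurableSet, finrank_euclideanSpace_fin]
  calc ((2 + 1 : ℕ) : ℝ≥0∞) * volume (Set.Ioo (0 : ℝ) 1 •
        (Subtype.val '' {v : 𝕊² | |⟪w, (v : ℝ³)⟫| ≤ h}))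
      ≤ 3 * volume {x : ℝ³ | |⟪x, ‖w‖⁻¹ • w⟫| ≤ s ∧ ‖x‖ ≤ 1} := by
        gcongr; norm_num
    _ = 3 * volume {z : ℝ³ | |z 0| ≤ s ∧ ‖z‖ ≤ 1} := by
        rw [volume_setOf_inner_norm_eq finrank_euclideanSpace_fin (fun t r => |t| ≤ s ∧ r ≤ 1)
          (by rw [norm_smul, norm_inv, norm_norm, inv_mul_cancel₀ (norm_ne_zero_iff.mpr hw)])]
    _ ≤ 3 * ENNReal.ofReal (8 * s) := by gcongr; exact volume_setOf_abs_apply_zero_le_norm_le hs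
    _ = ENNReal.ofReal (24 * h / ‖w‖) := by
        rw [← ENNReal.ofReal_ofNat 3, ← ENNReal.ofReal_mul (by norm_num)]
        congr 1
        ring

def coordCap (R h : ℝ) : Set ℝ³ := {z | ‖z‖ ≤ R ∧ R - h ≤ z 0}

theorem volume_coordCap_le {R h : ℝ} (hh : 0 ≤ h) (hhR : h ≤ R) :
    volume (coordCap R h) ≤ ENNReal.ofReal (8 * R * h ^ 2) := by
  set s := √(2 * R * h)
  have hs : s ^ 2 = 2 * R * h := Real.sq_sqrt (by nlinarith)
  have hs0 : 0 ≤ s := Real.sqrt_nonneg _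
  calc volume (coordCap R h)
      ≤ volume {z : ℝ³ | ∀ i, z i ∈ Set.Icc (![R - h, -s, -s] i) (![R, s, s] i)} := by
        refine measure_mono fun z ⟨hz, hz0⟩ => ?_
        have h_sq : z 0 ^ 2 + z 1 ^ 2 + z 2 ^ 2 ≤ R ^ 2 := by
          rw [← EuclideanSpace.norm_sq_fin_three]; nlinarith [norm_nonneg z]
        have h0 : z 0 ≤ R := (abs_le_of_sq_le_sq' (by nlinarith) (by linarith)).2
        have h1 := abs_le_of_sq_le_sq' (a := z 1) (b := s) (by nlinarith) (Real.sqrt_nonneg _)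
        have h2 := abs_le_of_sq_le_sq' (a := z 2) (b := s) (by nlinarith) (Real.sqrt_nonneg _)
        intro i
        fin_cases i <;> simp [h0, hz0, h1, h2]
    _ = ENNReal.ofReal (8 * R * h ^ 2) := by
        rw [EuclideanSpace.volume_setOf_forall_mem_Icc, Fin.prod_univ_three]
        simp only [Matrix.cons_val_zero, Matrix.cons_val_one, Matrix.cons_val_two,
          Matrix.head_cons, Matrix.tail_cons]
        rw [← ENNReal.ofReal_mul (by linarith), ← ENNReal.ofReal_mul (by nlinarith)]
        congr 1
        linear_combination 4 * h * hs

theorem ofReal_le_volume_coordCap {R h : ℝ} (hh : 0 ≤ h) (hhR : h ≤ R) :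
    ENNReal.ofReal (3 / 4 * R * h ^ 2) ≤ volume (coordCap R h) := by
  set t := √(3 / 8 * R * h)
  have ht : t ^ 2 = 3 / 8 * R * h := Real.sq_sqrt (by nlinarith)
  have ht0 : 0 ≤ t := Real.sqrt_nonneg _
  calc ENNReal.ofReal (3 / 4 * R * h ^ 2)
      = volume {z : ℝ³ | ∀ i, z i ∈ Set.Icc (![R - h, -t, -t] i) (![R - h / 2, t, t] i)} := by
        rw [EuclideanSpace.volume_setOf_forall_mem_Icc, Fin.prod_univ_three]
        simp only [Matrix.cons_val_zero, Matrix.cons_val_one, Matrix.cons_val_two,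
          Matrix.head_cons, Matrix.tail_cons]
        rw [← ENNReal.ofReal_mul (by linarith), ← ENNReal.ofReal_mul (by nlinarith)]
        congr 1
        linear_combination -2 * h * ht
    _ ≤ volume (coordCap R h) := by
        refine measure_mono fun z hz => ⟨?_, (hz 0).1⟩
        have h0 := hz 0
        have h1 := hz 1
        have h2 := hz 2
        simp only [Matrix.cons_val_zero, Matrix.cons_val_one, Matrix.cons_val_two,
          Matrix.head_cons, Matrix.tail_cons, Set.mem_Icc] at h0 h1 h2
        have h_sq : ‖z‖ ^ 2 ≤ R ^ 2 := by
          rw [EuclideanSpace.norm_sq_fin_three]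
          nlinarith [sq_le_sq' h1.1 h1.2, sq_le_sq' h2.1 h2.2]
        nlinarith [norm_nonneg z]

theorem isClosed_capParams (R h : ℝ) (a : ℝ³) : IsClosed (capParams R h a) :=
  (isClosed_le (f := fun p : 𝕊² × ℝ³ => ‖a - p.2‖) (by fun_prop) continuous_const).inter
    (isClosed_le (g := fun p : 𝕊² × ℝ³ => ⟪a - p.2, (p.1 : ℝ³)⟫) continuous_const (by fun_prop))

theorem volume_prodMk_preimage_capParams (R h : ℝ) (a : ℝ³) (v : 𝕊²) :
    volume (Prod.mk v ⁻¹' capParams R h a) = volume (coordCap R h) := by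
  have h_closed : IsClosed {x : ℝ³ | ‖x‖ ≤ R ∧ R - h ≤ ⟪x, (v : ℝ³)⟫} :=
    (isClosed_le continuous_norm continuous_const).inter
      (isClosed_le (g := fun x : ℝ³ => ⟪x, (v : ℝ³)⟫) continuous_const (by fun_prop))
  calc volume (Prod.mk v ⁻¹' capParams R h a)
      = volume {x : ℝ³ | ‖x‖ ≤ R ∧ R - h ≤ ⟪x, (v : ℝ³)⟫} :=
        (Measure.measurePreserving_sub_left volume a).measure_preimage
          h_closed.measurableSet.nullMeasurableSet
    _ = volume (coordCap R h) :=
        volume_setOf_inner_norm_eq finrank_euclideanSpace_fin (fun t r => r ≤ R ∧ R - h ≤ t)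
          (norm_eq_of_mem_sphere v)

theorem capParamMeasure_capParams (R h : ℝ) (a : ℝ³) :
    capParamMeasure (capParams R h a) = ENNReal.ofReal (4 * π) * volume (coordCap R h) := by
  rw [capParamMeasure, Measure.prod_apply (isClosed_capParams R h a).measurableSet]
  simp_rw [volume_prodMk_preimage_capParams]
  rw [lintegral_const, volume_toSphere_univ_fin_three, mul_comm]

theorem norm_sub_smul_sq_le_of_inner_ge {E : Type*} [NormedAddCommGroup E] [InnerProductSpace ℝ E]
    {R h : ℝ} (hR : 0 ≤ R) {x v : E} (hv : ‖v‖ = 1) (hx : ‖x‖ ≤ R) (hxv : R - h ≤ ⟪x, v⟫) :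
    ‖x - R • v‖ ^ 2 ≤ 2 * R * h := by
  rw [norm_sub_sq_real, real_inner_smul_right, norm_smul, hv, Real.norm_of_nonneg hR]
  nlinarith [norm_nonneg x]

theorem dist_sq_le_of_capParams_inter_nonempty {R h : ℝ} (hR : 0 ≤ R) {a b : ℝ³}
    (hab : (capParams R h a ∩ capParams R h b).Nonempty) : dist a b ^ 2 ≤ 8 * R * h := by
  obtain ⟨⟨v, c⟩, ⟨ha, hav⟩, hb, hbv⟩ := hab
  dsimp only at ha hav hb hbv
  have hx := norm_sub_smul_sq_le_of_inner_ge hR (norm_eq_of_mem_sphere v) ha hav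
  have hy := norm_sub_smul_sq_le_of_inner_ge hR (norm_eq_of_mem_sphere v) hb hbv
  have h_tri : dist a b ≤ ‖a - c - R • (v : ℝ³)‖ + ‖b - c - R • (v : ℝ³)‖ := by
    rw [dist_eq_norm, show a - b = (a - c - R • (v : ℝ³)) - (b - c - R • (v : ℝ³)) by abel]
    exact norm_sub_le _ _
  nlinarith [pow_le_pow_left₀ dist_nonneg h_tri 2,
    sq_nonneg (‖a - c - R • (v : ℝ³)‖ - ‖b - c - R • (v : ℝ³)‖)]

theorem abs_inner_sub_le_of_mem_capParams {R h : ℝ} {a b : ℝ³} {p : 𝕊² × ℝ³}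
    (ha : p ∈ capParams R h a) (hb : p ∈ capParams R h b) : |⟪a - b, (p.1 : ℝ³)⟫| ≤ h := by
  have h_le : ∀ x : ℝ³, ‖x‖ ≤ R → ⟪x, (p.1 : ℝ³)⟫ ≤ R := fun x hx =>
    (real_inner_le_norm _ _).trans (by rw [norm_eq_of_mem_sphere, mul_one]; exact hx)
  rw [show a - b = (a - p.2) - (b - p.2) by abel, inner_sub_left, abs_le]
  constructor <;> linarith [h_le _ ha.1, h_le _ hb.1, ha.2, hb.2]

theorem capParamMeasure_inter_le {R h : ℝ} (hh : 0 ≤ h) (hhR : h ≤ R) {a b : ℝ³} (hab : a ≠ b) :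
    capParamMeasure (capParams R h a ∩ capParams R h b) ≤
      ENNReal.ofReal (192 * R * h ^ 3 / dist a b) := by
  set band := {v : 𝕊² | |⟪a - b, (v : ℝ³)⟫| ≤ h}
  have h_slice : ∀ v, volume (Prod.mk v ⁻¹' (capParams R h a ∩ capParams R h b)) ≤
      band.indicator (fun _ => ENNReal.ofReal (8 * R * h ^ 2)) v := by
    intro v
    by_cases hv : v ∈ band
    · rw [Set.indicator_of_mem hv]
      calc volume (Prod.mk v ⁻¹' (capParams R h a ∩ capParams R h b))
          ≤ volume (Prod.mk v ⁻¹' capParams R h a) := by gcongr; exact Set.inter_subset_left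
        _ = volume (coordCap R h) := volume_prodMk_preimage_capParams R h a v
        _ ≤ ENNReal.ofReal (8 * R * h ^ 2) := volume_coordCap_le hh hhR
    · have h_empty : Prod.mk v ⁻¹' (capParams R h a ∩ capParams R h b) = ∅ :=
        Set.eq_empty_of_forall_notMem fun c hc => hv (abs_inner_sub_le_of_mem_capParams hc.1 hc.2)
      rw [Set.indicator_of_notMem hv, h_empty, measure_empty]
  have h_band_closed : IsClosed band :=
    isClosed_le (f := fun v : 𝕊² => |⟪a - b, (v : ℝ³)⟫|) (by fun_prop) continuous_const
  rw [capParamMeasure, Measure.prod_apply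
    ((isClosed_capParams R h a).inter (isClosed_capParams R h b)).measurableSet]
  calc ∫⁻ v, volume (Prod.mk v ⁻¹' (capParams R h a ∩ capParams R h b))
        ∂(volume : Measure ℝ³).toSphere
      ≤ ∫⁻ v, band.indicator (fun _ => ENNReal.ofReal (8 * R * h ^ 2)) v
          ∂(volume : Measure ℝ³).toSphere :=
        lintegral_mono h_slice
    _ = ENNReal.ofReal (8 * R * h ^ 2) * (volume : Measure ℝ³).toSphere band := by
        rw [lintegral_indicator_const h_band_closed.measurableSet]
    _ ≤ ENNReal.ofReal (8 * R * h ^ 2) * ENNReal.ofReal (24 * h / ‖a - b‖) := by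
        gcongr
        exact toSphere_setOf_abs_inner_le_le (sub_ne_zero.mpr hab) hh
    _ = ENNReal.ofReal (192 * R * h ^ 3 / dist a b) := by
        rw [← ENNReal.ofReal_mul (by nlinarith), dist_eq_norm]
        ring_nf

theorem sum_capParamMeasure_inter_le {R h : ℝ} (hh : 0 ≤ h) (hhR : h ≤ R) {A : Finset ℝ³}
    (hA : ∀ a ∈ A, ∀ b ∈ A, a ≠ b → 1 ≤ dist a b) {a : ℝ³} (ha : a ∈ A) :
    ∑ b ∈ A, capParamMeasure (capParams R h a ∩ capParams R h b) ≤
      ENNReal.ofReal (32 * π * R * h ^ 2 + 190464 * R ^ 2 * h ^ 4) := by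
  classical
  have hR : 0 ≤ R := hh.trans hhR
  set K := √(8 * R * h)
  set near : ℝ³ → Prop := fun b => 0 < dist a b ∧ dist a b ≤ K
  have h_diag : capParamMeasure (capParams R h a) ≤ ENNReal.ofReal (32 * π * R * h ^ 2) := by
    rw [capParamMeasure_capParams, show 32 * π * R * h ^ 2 = 4 * π * (8 * R * h ^ 2) by ring,
      ENNReal.ofReal_mul (q := 8 * R * h ^ 2) (by positivity)]
    exact mul_le_mul_right (volume_coordCap_le hh hhR) _
  have h_far : ∀ b ∈ A.erase a, capParamMeasure (capParams R h a ∩ capParams R h b) ≠ 0 →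
      near b := fun b hb hne =>
    ⟨dist_pos.mpr (Finset.ne_of_mem_erase hb).symm, Real.le_sqrt_of_sq_le
      (dist_sq_le_of_capParams_inter_nonempty hR (nonempty_of_measure_ne_zero hne))⟩
  have h_near : ∑ b ∈ A.erase a with near b, capParamMeasure (capParams R h a ∩ capParams R h b)
      ≤ ENNReal.ofReal (190464 * R ^ 2 * h ^ 4) := by
    calc ∑ b ∈ A.erase a with near b, capParamMeasure (capParams R h a ∩ capParams R h b)
        ≤ ∑ b ∈ A.erase a with near b, ENNReal.ofReal (192 * R * h ^ 3 * (dist a b)⁻¹) :=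
          Finset.sum_le_sum fun b hb => (capParamMeasure_inter_le hh hhR
            (Finset.ne_of_mem_erase (Finset.mem_of_mem_filter b hb)).symm).trans_eq (by ring_nf)
      _ = ENNReal.ofReal (192 * R * h ^ 3 * ∑ b ∈ A.erase a with near b, (dist a b)⁻¹) := by
          rw [Finset.mul_sum, ENNReal.ofReal_sum_of_nonneg fun b _ => by positivity]
      _ ≤ ENNReal.ofReal (192 * R * h ^ 3 * (124 * K ^ 2)) := by
          gcongr
          refine le_trans ?_ (sum_inv_dist_le_of_separated finrank_euclideanSpace_fin hA ha
            (Real.sqrt_nonneg _))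
          rw [Finset.filter_erase]
          exact Finset.sum_le_sum_of_subset_of_nonneg (Finset.erase_subset _ _)
            fun _ _ _ => by positivity
      _ = ENNReal.ofReal (190464 * R ^ 2 * h ^ 4) := by
          rw [Real.sq_sqrt (by positivity)]
          ring_nf
  rw [← Finset.add_sum_erase A _ ha, Set.inter_self, ← Finset.sum_filter_of_ne h_far,
    ENNReal.ofReal_add (by positivity) (by positivity)]
  exact add_le_add h_diag h_near

theorem ofReal_le_capParamMeasure_biUnion {R h : ℝ} (hh : 0 < h) (hhR : h ≤ R) {A : Finset ℝ³}
    (hA : ∀ a ∈ A, ∀ b ∈ A, a ≠ b → 1 ≤ dist a b) :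
    ENNReal.ofReal (A.card * (3 * π * R * h ^ 2) ^ 2 /
        (32 * π * R * h ^ 2 + 190464 * R ^ 2 * h ^ 4)) ≤
      capParamMeasure (⋃ a ∈ A, capParams R h a) := by
  set m := 3 * π * R * h ^ 2
  set D := 32 * π * R * h ^ 2 + 190464 * R ^ 2 * h ^ 4
  have hR : 0 < R := hh.trans_le hhR
  have h_first : A.card * ENNReal.ofReal m ≤ ∑ a ∈ A, capParamMeasure (capParams R h a) := by
    refine (nsmul_eq_mul _ _).symm.trans_le (Finset.card_nsmul_le_sum _ _ _ fun a _ => ?_)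
    rw [capParamMeasure_capParams, show m = 4 * π * (3 / 4 * R * h ^ 2) by ring,
      ENNReal.ofReal_mul (q := 3 / 4 * R * h ^ 2) (by positivity)]
    exact mul_le_mul_right (ofReal_le_volume_coordCap hh.le hhR) _
  have h_second : ∑ a ∈ A, ∑ b ∈ A, capParamMeasure (capParams R h a ∩ capParams R h b) ≤
      A.card * ENNReal.ofReal D := by
    simpa using Finset.sum_le_card_nsmul _ _ _ fun a ha =>
      sum_capParamMeasure_inter_le hh.le hhR hA ha
  have h_moment : A.card * (A.card * ENNReal.ofReal m ^ 2) ≤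
      A.card * (capParamMeasure (⋃ a ∈ A, capParams R h a) * ENNReal.ofReal D) := by
    calc A.card * (A.card * ENNReal.ofReal m ^ 2) = (A.card * ENNReal.ofReal m) ^ 2 := by ring
      _ ≤ (∑ a ∈ A, capParamMeasure (capParams R h a)) ^ 2 := by gcongr
      _ ≤ capParamMeasure (⋃ a ∈ A, capParams R h a) *
            ∑ a ∈ A, ∑ b ∈ A, capParamMeasure (capParams R h a ∩ capParams R h b) :=
          sq_sum_measure_le_measure_biUnion_mul_sum_measure_inter _ A
            fun a _ => (isClosed_capParams R h a).measurableSet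
      _ ≤ capParamMeasure (⋃ a ∈ A, capParams R h a) * (A.card * ENNReal.ofReal D) := by
          gcongr
      _ = A.card * (capParamMeasure (⋃ a ∈ A, capParams R h a) * ENNReal.ofReal D) := by ring
  rcases A.eq_empty_or_nonempty with rfl | hA_ne
  · simp
  rw [ENNReal.ofReal_div_of_pos (by positivity), ENNReal.ofReal_mul (by positivity),
    ENNReal.ofReal_natCast, ENNReal.ofReal_pow (by positivity)]
  exact ENNReal.div_le_of_le_mul <| (ENNReal.mul_le_mul_iff_right (by simpa using hA_ne.ne_empty)
    (ENNReal.natCast_ne_top _)).mp h_moment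

theorem biUnion_capParams_subset {R h : ℝ} {A : Finset ℝ³}
    (hA : (A : Set ℝ³) ⊆ closedBall 0 R) :
    (⋃ a ∈ A, capParams R h a) ⊆ {p | ‖p.2‖ ≤ 2 * R ∧ ∃ a ∈ A, p ∈ capParams R h a} := by
  simp only [Set.iUnion_subset_iff]
  intro a ha p hp
  have ha_norm : ‖a‖ ≤ R := by simpa using hA ha
  refine ⟨?_, a, ha, hp⟩
  calc ‖p.2‖ = ‖a - (a - p.2)‖ := by rw [sub_sub_cancel]
    _ ≤ ‖a‖ + ‖a - p.2‖ := norm_sub_le _ _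
    _ ≤ 2 * R := by linarith [hp.1]

theorem measure_nonempty_capParams_lower_bound :
    ∀ α : ℝ, 0 < α → ∃ c : ℝ, 0 < c ∧
      ∀ n : ℕ, 4 ≤ n →
        ∀ A : Finset (EuclideanSpace ℝ (Fin 3)), A.card = n →
          (∀ a ∈ A, ∀ b ∈ A, a ≠ b → 1 ≤ dist a b) →
          (A : Set (EuclideanSpace ℝ (Fin 3))) ⊆
            closedBall (0 : EuclideanSpace ℝ (Fin 3)) (α * (n : ℝ) ^ ((1 : ℝ) / 3)) →
          ENNReal.ofReal
              (c * (4 * π) * (32 / 3 * π * (α * (n : ℝ) ^ ((1 : ℝ) / 3)) ^ 3)) ≤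
            capParamMeasure
              {p : sphere (0 : EuclideanSpace ℝ (Fin 3)) 1 × EuclideanSpace ℝ (Fin 3) |
                ‖p.2‖ ≤ 2 * (α * (n : ℝ) ^ ((1 : ℝ) / 3)) ∧
                ∃ a ∈ A,
                  p ∈ capParams (α * (n : ℝ) ^ ((1 : ℝ) / 3)) (α * (n : ℝ) ^ (-(1 : ℝ) / 6)) a} := by
  intro α hα
  -- chosen so that the claimed bound is `n (3π α³)² / (32π α³ + 190464 α⁶)`
  refine ⟨27 * α ^ 3 / (128 * (32 * π * α ^ 3 + 190464 * α ^ 6)), by positivity, ?_⟩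
  intro n hn A hcard hsep hball
  set R := α * (n : ℝ) ^ ((1 : ℝ) / 3)
  set h := α * (n : ℝ) ^ (-(1 : ℝ) / 6)
  have hn1 : (1 : ℝ) ≤ n := by exact_mod_cast (by omega : 1 ≤ n)
  have hn0 : (0 : ℝ) < n := by positivity
  have hh : 0 < h := by positivity
  have hhR : h ≤ R :=
    mul_le_mul_of_nonneg_left (Real.rpow_le_rpow_of_exponent_le hn1 (by norm_num)) hα.le
  have hRh : R * h ^ 2 = α ^ 3 := by
    rw [mul_pow, ← Real.rpow_natCast ((n : ℝ) ^ (-(1 : ℝ) / 6)) 2, ← Real.rpow_mul hn0.le,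
      mul_mul_mul_comm, ← Real.rpow_add hn0]
    norm_num
    ring
  have hR3 : R ^ 3 = α ^ 3 * n := by
    rw [mul_pow, ← Real.rpow_natCast ((n : ℝ) ^ ((1 : ℝ) / 3)) 3, ← Real.rpow_mul hn0.le]
    norm_num
  refine le_trans (le_of_eq ?_) ((ofReal_le_capParamMeasure_biUnion hh hhR hsep).trans
    (measure_mono (biUnion_capParams_subset hball)))
  congr 1
  rw [hcard, show 3 * π * R * h ^ 2 = 3 * π * (R * h ^ 2) by ring,
    show 32 * π * R * h ^ 2 + 190464 * R ^ 2 * h ^ 4 =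
      32 * π * (R * h ^ 2) + 190464 * (R * h ^ 2) ^ 2 by ring, hRh, hR3]
  field_simp
  ring
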